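/- arXiv:2511.17871 — 3 statements merged into one kernel-verified Lean document; each statement's English description precedes it below -/
import Mathlib

section
/- Let α be an irrational real number and let g : ℝ → ℝ be a smooth (C^∞) function satisfying g(t + 1) = g(t) and g(t + α) = g(t) for all t ∈ ℝ. Then g is constant. -/
/-- If `α` is irrational and `g : ℝ → ℝ` is smooth with `g (t + 1) = g t` and
`g (t + α) = g t` for all `t`, then `g` is constant. -/
theorem smooth_doubly_periodic_const (α : ℝ) (hα : Irrational α)
    (g : ℝ → ℝ) (hg : ContDiff ℝ (⊤ : ℕ∞) g)
    (h1 : ∀ t : ℝ, g (t + 1) = g t) (h2 : ∀ t : ℝ, g (t + α) = g t) :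
    ∀ s t : ℝ, g s = g t := by
  have hgc : Continuous g := hg.continuous
  set S : AddSubgroup ℝ := AddSubgroup.closure {1, α} with hS
  have hinv : ∀ x ∈ S, ∀ t : ℝ, g (t + x) = g t := by
    intro x hx
    induction hx using AddSubgroup.closure_induction with
    | mem y hy =>
      rcases hy with rfl | rfl
      · exact h1
      · exact h2
    | zero => simp
    | add a b _ _ ha hb => intro t; rw [← add_assoc, hb, ha]
    | neg a _ ha => intro t; have := ha (t + -a); simpa using this.symm
  have hdense : Dense (S : Set ℝ) := by
    rcases S.dense_or_cyclic with hd | ⟨a, ha⟩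
    · exact hd
    · exfalso
      have h1S : (1 : ℝ) ∈ S := AddSubgroup.subset_closure (by simp)
      have hαS : α ∈ S := AddSubgroup.subset_closure (by simp)
      rw [ha, AddSubgroup.mem_closure_singleton] at h1S hαS
      rcases h1S with ⟨m, hm⟩
      rcases hαS with ⟨n, hn⟩
      have ha0 : a ≠ 0 := by rintro rfl; simp at hm
      have hm0 : (m : ℝ) ≠ 0 := by
        intro h; rw [zsmul_eq_mul, h, zero_mul] at hm; exact one_ne_zero hm.symm
      apply hα
      refine ⟨(n : ℚ) / (m : ℚ), ?_⟩
      push_cast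
      rw [div_eq_iff hm0]
      rw [zsmul_eq_mul] at hm hn
      rw [← hn, mul_assoc, mul_comm a, hm, mul_one]
  intro s t
  have hsub : (fun x => t + x) '' (S : Set ℝ) ⊆ {x | g x = g t} := by
    rintro _ ⟨x, hx, rfl⟩
    exact hinv x hx t
  have hd2 : Dense ((fun x => t + x) '' (S : Set ℝ)) :=
    ((Homeomorph.addLeft t).isDenseEmbedding.dense_image).mpr hdense
  have hclosed : IsClosed {x : ℝ | g x = g t} := isClosed_eq hgc continuous_const
  exact (hclosed.closure_subset_iff.mpr hsub) (hd2 s)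
end

section
/- Let α and β be irrational real numbers. Then the following are equivalent: (i) there exists a nonzero real number a such that the image of ℤ + αℤ under multiplication by a is exactly ℤ + βℤ (i.e., a·(ℤ + αℤ) = ℤ + βℤ as subsets of ℝ); (ii) there exist integers a, b, c, d with a·d − b·c = 1 or a·d − b·c = −1, and α = (a + b·β)/(c + d·β). -/
/-!
Multiplication by `a` sends `ℤ + αℤ` onto the `ℤ`-span of `a` and `aα`. When `β` is irrational,
`1` and `β` form a `ℤ`-basis of `ℤ + βℤ`, so two of its elements `a + bβ`, `c + dβ` span all of it
exactly when their coordinate matrix is invertible over `ℤ`, i.e. `ad - bc = ±1`. Both directions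
then read `α` off as `aα / a`.
-/

def intLattice (β : ℝ) : Set ℝ := {x | ∃ p q : ℤ, x = p + q * β}

def intSpan (u v : ℝ) : Set ℝ := {x | ∃ m n : ℤ, x = m * u + n * v}

lemma image_mul_intLattice (a α : ℝ) : (a * ·) '' intLattice α = intSpan a (a * α) := by
  ext x
  constructor
  · rintro ⟨_, ⟨m, n, rfl⟩, rfl⟩
    exact ⟨m, n, by ring⟩
  · rintro ⟨m, n, rfl⟩
    exact ⟨m + n * α, ⟨m, n, rfl⟩, by ring⟩

lemma Irrational.eq_zero_of_intCast_add_intCast_mul_eq_zero {β : ℝ} (hβ : Irrational β)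
    {p q : ℤ} (h : (p : ℝ) + q * β = 0) : p = 0 ∧ q = 0 := by
  by_cases hq : q = 0
  · subst hq
    exact ⟨by simpa using h, rfl⟩
  · exact absurd h ((hβ.intCast_mul hq).intCast_add p).ne_zero

lemma Irrational.eq_and_eq_of_intCast_add_intCast_mul_eq {β : ℝ} (hβ : Irrational β)
    {p q p' q' : ℤ} (h : (p : ℝ) + q * β = p' + q' * β) : p = p' ∧ q = q' := by
  have := hβ.eq_zero_of_intCast_add_intCast_mul_eq_zero (p := p - p') (q := q - q')
    (by push_cast; linear_combination h)
  omega

lemma intSpan_eq_intLattice_of_isUnit (β : ℝ) {a b c d : ℤ} (hdet : IsUnit (a * d - b * c)) :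
    intSpan (a + b * β) (c + d * β) = intLattice β := by
  obtain ⟨e, he⟩ : ∃ e : ℤ, e * (a * d - b * c) = 1 := ⟨_, hdet.unit.inv_mul⟩
  ext x
  constructor
  · rintro ⟨m, n, rfl⟩
    exact ⟨m * a + n * c, m * b + n * d, by push_cast; ring⟩
  · rintro ⟨p, q, rfl⟩
    -- Cramer's rule, with `e` the inverse of the determinant
    refine ⟨e * (d * p - c * q), e * (a * q - b * p), ?_⟩
    have he' : (e : ℝ) * (a * d - b * c) = 1 := by exact_mod_cast he
    push_cast
    linear_combination (-(p : ℝ) - q * β) * he'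

lemma isUnit_of_intSpan_eq_intLattice {β : ℝ} (hβ : Irrational β) {a b c d : ℤ}
    (h : intSpan (a + b * β) (c + d * β) = intLattice β) : IsUnit (a * d - b * c) := by
  obtain ⟨m, n, hone⟩ : (1 : ℝ) ∈ intSpan (a + b * β) (c + d * β) := h ▸ ⟨1, 0, by simp⟩
  obtain ⟨r, s, hβ'⟩ : β ∈ intSpan (a + b * β) (c + d * β) := h ▸ ⟨0, 1, by simp⟩
  obtain ⟨h₁, h₂⟩ := hβ.eq_and_eq_of_intCast_add_intCast_mul_eq
    (p := m * a + n * c) (q := m * b + n * d) (p' := 1) (q' := 0)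
    (by push_cast; linear_combination -hone)
  obtain ⟨-, h₄⟩ := hβ.eq_and_eq_of_intCast_add_intCast_mul_eq
    (p := r * a + s * c) (q := r * b + s * d) (p' := 0) (q' := 1)
    (by push_cast; linear_combination -hβ')
  -- the coordinate matrices of `(1, β)` and of the two generators are mutually inverse
  refine IsUnit.of_mul_eq_one (m * s - n * r) ?_
  linear_combination (r * b + s * d) * h₁ - (r * a + s * c) * h₂ + h₄

theorem mul_lattice_eq_iff_moebius_det_pm_one_general (α β : ℝ)
    (hβ : Irrational β) :
    (∃ a : ℝ, a ≠ 0 ∧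
        (fun x : ℝ => a * x) '' {x : ℝ | ∃ m n : ℤ, x = (m : ℝ) + (n : ℝ) * α} =
          {x : ℝ | ∃ p q : ℤ, x = (p : ℝ) + (q : ℝ) * β}) ↔
    (∃ a b c d : ℤ, (a * d - b * c = 1 ∨ a * d - b * c = -1) ∧
        α = ((a : ℝ) + (b : ℝ) * β) / ((c : ℝ) + (d : ℝ) * β)) := by
  simp_rw [← Int.isUnit_iff]
  constructor
  · rintro ⟨u, hu, h⟩
    replace h : intSpan u (u * α) = intLattice β := (image_mul_intLattice u α).symm.trans h
    obtain ⟨c, d, hcd⟩ : u ∈ intLattice β := h ▸ ⟨1, 0, by simp⟩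
    obtain ⟨a, b, hab⟩ : u * α ∈ intLattice β := h ▸ ⟨0, 1, by simp⟩
    rw [hab, hcd] at h
    refine ⟨a, b, c, d, ?_, by rw [← hcd, ← hab, mul_div_cancel_left₀ α hu]⟩
    simpa [neg_sub, mul_comm] using (isUnit_of_intSpan_eq_intLattice hβ h).neg
  · rintro ⟨a, b, c, d, hdet, hα⟩
    have hu : (c : ℝ) + d * β ≠ 0 := fun h0 ↦ by
      obtain ⟨rfl, rfl⟩ := hβ.eq_zero_of_intCast_add_intCast_mul_eq_zero h0
      simp at hdet
    refine ⟨c + d * β, hu, ?_⟩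
    change _ '' intLattice α = intLattice β
    rw [image_mul_intLattice, hα, mul_div_cancel₀ _ hu]
    exact intSpan_eq_intLattice_of_isUnit β (by simpa [neg_sub, mul_comm] using hdet.neg)

/-- For irrational `α, β`: there is a nonzero real `a` with
`a·(ℤ + αℤ) = ℤ + βℤ` (as subsets of `ℝ`) iff
`α = (a + bβ)/(c + dβ)` for some integers `a, b, c, d` with `ad - bc = ±1`. -/
theorem mul_lattice_eq_iff_moebius_det_pm_one (α β : ℝ)
    (hα : Irrational α) (hβ : Irrational β) :
    (∃ a : ℝ, a ≠ 0 ∧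
        (fun x : ℝ => a * x) '' {x : ℝ | ∃ m n : ℤ, x = (m : ℝ) + (n : ℝ) * α} =
          {x : ℝ | ∃ p q : ℤ, x = (p : ℝ) + (q : ℝ) * β}) ↔
    (∃ a b c d : ℤ, (a * d - b * c = 1 ∨ a * d - b * c = -1) ∧
        α = ((a : ℝ) + (b : ℝ) * β) / ((c : ℝ) + (d : ℝ) * β)) :=
  mul_lattice_eq_iff_moebius_det_pm_one_general α β hβ
end

section
/- Let m and n be natural numbers with 1 ≤ n < m, let ε > 0, and let F be a map from the m-dimensional Euclidean space ℝᵐ to the n-dimensional Euclidean space ℝⁿ that is smooth (C^∞) on the open ball B(0, ε), satisfies F(0) = 0, and is radially invariant in norm: for all x, y ∈ B(0, ε) with ‖x‖ = ‖y‖ one has ‖F(x)‖ = ‖F(y)‖. Then the Fréchet derivative of F at 0 is zero, and ‖F(x)‖² = o(‖x‖²) as x → 0. -/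
open Asymptotics Metric

/-- If `1 ≤ n < m`, `F : ℝᵐ → ℝⁿ` is smooth on the ball `B(0, ε)` with
`F 0 = 0`, and `‖F x‖` depends only on `‖x‖` on this ball, then the Fréchet
derivative of `F` at `0` vanishes and `‖F x‖² = o(‖x‖²)` as `x → 0`. -/
theorem radially_invariant_smooth_map_zero_deriv
    (m n : ℕ) (hn : 1 ≤ n) (hnm : n < m) (ε : ℝ) (hε : 0 < ε)
    (F : EuclideanSpace ℝ (Fin m) → EuclideanSpace ℝ (Fin n))
    (hF : ContDiffOn ℝ (⊤ : ℕ∞) F (ball (0 : EuclideanSpace ℝ (Fin m)) ε))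
    (hF0 : F 0 = 0)
    (hrad : ∀ x ∈ ball (0 : EuclideanSpace ℝ (Fin m)) ε,
      ∀ y ∈ ball (0 : EuclideanSpace ℝ (Fin m)) ε, ‖x‖ = ‖y‖ → ‖F x‖ = ‖F y‖) :
    fderiv ℝ F 0 = 0 ∧
      (fun x : EuclideanSpace ℝ (Fin m) => ‖F x‖ ^ 2) =o[nhds 0]
        fun x : EuclideanSpace ℝ (Fin m) => ‖x‖ ^ 2 := by
  set A := fderiv ℝ F 0 with hAdef
  have hdiff : DifferentiableAt ℝ F 0 :=
    (hF.differentiableOn (by simp)).differentiableAt (ball_mem_nhds 0 hε)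
  have hA : HasFDerivAt F A 0 := hdiff.hasFDerivAt
  have hlo : (fun z => F z - A z) =o[nhds (0 : EuclideanSpace ℝ (Fin m))]
      fun z => z := by
    have := hA.isLittleO
    simpa [hF0] using this
  -- key: norms of A depend only on the norm of the input
  have key : ∀ x y : EuclideanSpace ℝ (Fin m), ‖x‖ = ‖y‖ → ‖A x‖ ≤ ‖A y‖ := by
    intro x y hxy
    rcases eq_or_lt_of_le (norm_nonneg x) with h0 | hxpos
    · have hx0 : x = 0 := by simpa using (norm_eq_zero.mp h0.symm)
      have hy0 : y = 0 := norm_eq_zero.mp (by rw [← hxy, ← h0])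
      simp [hx0, hy0]
    · refine le_of_forall_pos_le_add ?_
      intro δ hδ
      set c : ℝ := δ / (2 * ‖x‖) with hc
      have hcpos : 0 < c := div_pos hδ (by positivity)
      rcases Metric.eventually_nhds_iff.mp (hlo.def hcpos) with ⟨r, hr, hball⟩
      set t : ℝ := min r ε / (2 * ‖x‖) with ht
      have htpos : 0 < t := div_pos (lt_min hr hε) (by positivity)
      have htx : ‖t • x‖ = t * ‖x‖ := by
        rw [norm_smul, Real.norm_eq_abs, abs_of_pos htpos]
      have hty : ‖t • y‖ = t * ‖x‖ := by
        rw [norm_smul, Real.norm_eq_abs, abs_of_pos htpos, ← hxy]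
      have htval : t * ‖x‖ = min r ε / 2 := by
        rw [ht]; field_simp
      have hsmall : t * ‖x‖ < min r ε := by
        rw [htval]; exact half_lt_self (lt_min hr hε)
      have hxr : ‖t • x‖ < r := by rw [htx]; exact hsmall.trans_le (min_le_left _ _)
      have hyr : ‖t • y‖ < r := by rw [hty]; exact hsmall.trans_le (min_le_left _ _)
      have hxball : t • x ∈ ball (0 : EuclideanSpace ℝ (Fin m)) ε := by
        rw [mem_ball_zero_iff, htx]; exact hsmall.trans_le (min_le_right _ _)
      have hyball : t • y ∈ ball (0 : EuclideanSpace ℝ (Fin m)) ε := by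
        rw [mem_ball_zero_iff, hty]; exact hsmall.trans_le (min_le_right _ _)
      have hFeq : ‖F (t • x)‖ = ‖F (t • y)‖ := by
        apply hrad _ hxball _ hyball
        rw [htx, hty]
      have hbx := hball (by simpa using hxr)
      have hby := hball (by simpa using hyr)
      simp only [htx, hty] at hbx hby
      -- chain of inequalities
      have h1 : t * ‖A x‖ ≤ ‖F (t • x)‖ + c * (t * ‖x‖) := by
        have e1 : A (t • x) = F (t • x) - (F (t • x) - A (t • x)) := by abel
        have hle : ‖A (t • x)‖ ≤ ‖F (t • x)‖ + ‖F (t • x) - A (t • x)‖ := by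
          have h0 := norm_sub_le (F (t • x)) (F (t • x) - A (t • x))
          rw [← e1] at h0; exact h0
        calc t * ‖A x‖ = ‖A (t • x)‖ := by
              rw [map_smul, norm_smul, Real.norm_eq_abs, abs_of_pos htpos]
          _ ≤ ‖F (t • x)‖ + ‖F (t • x) - A (t • x)‖ := hle
          _ ≤ ‖F (t • x)‖ + c * (t * ‖x‖) := by linarith [hbx]
      have h2 : ‖F (t • y)‖ ≤ t * ‖A y‖ + c * (t * ‖x‖) := by
        have e2 : F (t • y) = A (t • y) + (F (t • y) - A (t • y)) := by abel
        have hle : ‖F (t • y)‖ ≤ ‖A (t • y)‖ + ‖F (t • y) - A (t • y)‖ := by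
          have h0 := norm_add_le (A (t • y)) (F (t • y) - A (t • y))
          rw [← e2] at h0; exact h0
        have hAt : ‖A (t • y)‖ = t * ‖A y‖ := by
          rw [map_smul, norm_smul, Real.norm_eq_abs, abs_of_pos htpos]
        rw [hAt] at hle
        linarith [hby]
      have hfinal : t * ‖A x‖ ≤ t * ‖A y‖ + 2 * c * (t * ‖x‖) := by
        rw [hFeq] at h1; linarith
      have hc2 : 2 * c * ‖x‖ = δ := by
        rw [hc]; field_simp
      have := (mul_le_mul_iff_right₀ htpos).mp (by linarith : t * ‖A x‖ ≤ t * (‖A y‖ + 2 * c * ‖x‖))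
      rw [hc2] at this
      exact this
  -- A has a nonzero kernel vector since n < m
  have hnotinj : ¬ Function.Injective A := by
    intro hinj
    have h1 := LinearMap.finrank_le_finrank_of_injective (f := (A : EuclideanSpace ℝ (Fin m) →ₗ[ℝ] EuclideanSpace ℝ (Fin n))) hinj
    simp [finrank_euclideanSpace_fin] at h1
    omega
  rcases Function.not_injective_iff.mp hnotinj with ⟨a, b, hab, hne⟩
  set w := a - b with hw
  have hw0 : w ≠ 0 := sub_ne_zero.mpr hne
  have hAw : A w = 0 := by rw [hw, map_sub, hab, sub_self]
  -- A = 0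
  have hAzero : ∀ x : EuclideanSpace ℝ (Fin m), A x = 0 := by
    intro x
    rcases eq_or_ne x 0 with rfl | hx
    · simp
    · set w' : EuclideanSpace ℝ (Fin m) := (‖x‖ / ‖w‖) • w with hw'
      have hnw : ‖w‖ ≠ 0 := norm_ne_zero_iff.mpr hw0
      have hw'norm : ‖w'‖ = ‖x‖ := by
        rw [hw', norm_smul, Real.norm_eq_abs, abs_of_nonneg (by positivity),
          div_mul_cancel₀ _ hnw]
      have hAw' : A w' = 0 := by rw [hw', map_smul, hAw, smul_zero]
      have := key x w' hw'norm.symm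
      rw [hAw'] at this
      simp at this
      exact norm_le_zero_iff.mp (by simpa using this)
  have hAeq : A = 0 := ContinuousLinearMap.ext fun x => by simpa using hAzero x
  refine ⟨hAeq, ?_⟩
  have hloF : (fun z : EuclideanSpace ℝ (Fin m) => F z) =o[nhds 0] fun z => z := by
    have := hlo
    simp only [hAeq] at this
    simpa using this
  have hnn : (fun x : EuclideanSpace ℝ (Fin m) => ‖F x‖) =o[nhds 0]
      fun x => ‖x‖ := hloF.norm_norm
  have := hnn.mul hnn
  simpa [pow_two] using this
end
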